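/- Let I be an independent set of a tree T, w ∈ I, and z a neighbor of w such that the token on w is (T_w^z, I ∩ T_w^z)-movable. Then there exists a reconfiguration sequence in T from I to an independent set I' with w ∉ I', of length O(|V(T_w^z)|), in which every intermediate independent set J satisfies J ∩ (T \ T_w^z) = I ∩ (T \ T_w^z). -/

import Mathlib

/-- `I` is an independent set of `G`. -/
def IndepSet {V : Type*} (G : SimpleGraph V) (I : Set V) : Prop :=
  ∀ ⦃u⦄, u ∈ I → ∀ ⦃v⦄, v ∈ I → ¬ G.Adj u v

/-- `B` is obtained from `A` by sliding one token along an edge. -/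
def Slide {V : Type*} (G : SimpleGraph V) (A B : Set V) : Prop :=
  ∃ u v, G.Adj u v ∧ A \ B = {u} ∧ B \ A = {v}

/-- One step of reconfiguration: a slide whose result is independent. -/
def Step {V : Type*} (G : SimpleGraph V) (A B : Set V) : Prop :=
  IndepSet G B ∧ Slide G A B

/-- `I` is reconfigurable to `J` by token sliding. -/
def Reconf {V : Type*} (G : SimpleGraph V) : Set V → Set V → Prop :=
  Relation.ReflTransGen (Step G)

/-- One reconfiguration step restricted to the induced subgraph on `S`. -/
def StepOn {V : Type*} (G : SimpleGraph V) (S : Set V) (A B : Set V) : Prop :=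
  B ⊆ S ∧ IndepSet G B ∧ Slide G A B

/-- Reconfigurability within the induced subgraph on `S`. -/
def ReconfOn {V : Type*} (G : SimpleGraph V) (S : Set V) : Set V → Set V → Prop :=
  Relation.ReflTransGen (StepOn G S)

/-- The token on `u` is `(G, I)`-rigid. -/
def Rigid {V : Type*} (G : SimpleGraph V) (I : Set V) (u : V) : Prop :=
  ∀ J, Reconf G I J → u ∈ J

/-- The token on `u` is rigid for the subgraph induced on `S`, starting from `I ∩ S`. -/
def RigidOn {V : Type*} (G : SimpleGraph V) (S I : Set V) (u : V) : Prop :=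
  ∀ J, ReconfOn G S (I ∩ S) J → u ∈ J

/-- The set `R(I)` of vertices carrying `(G, I)`-rigid tokens. -/
def RigidSet {V : Type*} (G : SimpleGraph V) (I : Set V) : Set V :=
  {u ∈ I | Rigid G I u}

/-- For an edge `{u, v}` of a tree `G`, `SubtreeSide G u v` is the vertex set of the
subtree `T_v^u`: the component of `v` after removing the edge, i.e. vertices strictly
closer to `v` than to `u`. -/
def SubtreeSide {V : Type*} (G : SimpleGraph V) (u v : V) : Set V :=
  {x | G.dist x v < G.dist x u}

/-- The closed neighborhood `N[R]` of a vertex subset `R`. -/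
def ClosedNbhd {V : Type*} (G : SimpleGraph V) (R : Set V) : Set V :=
  R ∪ {x | ∃ r ∈ R, G.Adj r x}

/-!
Induction on `|T_w^z|`. Take a sequence inside `T_w^z` that moves the token on `w`, and stop it
just before the first slide of that token, to a child `v` of `w`. At that moment `v` and all its
neighbours `d ≠ w` are empty, and up to then `v` stays empty (it is next to the token on `w`),
so the sequence restricts to every subtree `T_d^v`: each token on such a `d` is movable in
`T_d^v`. By induction these pairwise disjoint subtrees are vacated one after another, which
changes nothing elsewhere, and then `w` slides to `v`. The subtrees `T_d^v` avoid `w` and `v`, so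
this takes at most `(|T_w^z| - 2) + 1` slides.
-/

open SimpleGraph

section SubtreeSide

variable {V : Type*} {G : SimpleGraph V} {u v w x y z : V}

lemma mem_subtreeSide_self (h : G.Adj u v) : v ∈ SubtreeSide G u v := by
  simp [SubtreeSide, dist_comm, dist_eq_one_iff_adj.2 h]

lemma left_notMem_subtreeSide : u ∉ SubtreeSide G u v := by
  simp [SubtreeSide]

lemma SimpleGraph.IsTree.length_eq_dist (hG : G.IsTree) {p : G.Walk x y} (hp : p.IsPath) :
    p.length = G.dist x y := by
  obtain ⟨q, hq, hlen⟩ := hG.connected.exists_path_of_dist x y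
  rw [← hlen, (hG.existsUnique_path x y).unique hp hq]

lemma SimpleGraph.IsTree.mem_subtreeSide_iff (hG : G.IsTree) (huv : G.Adj u v) :
    x ∈ SubtreeSide G u v ↔ G.dist x u = G.dist x v + 1 := by
  have := hG.dist_eq_dist_add_one_of_adj x huv
  simp only [SubtreeSide, Set.mem_ofPred_eq]
  omega

lemma SimpleGraph.IsTree.notMem_subtreeSide_iff (hG : G.IsTree) (huv : G.Adj u v) :
    x ∉ SubtreeSide G u v ↔ x ∈ SubtreeSide G v u := by
  have := hG.dist_eq_dist_add_one_of_adj x huv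
  simp only [SubtreeSide, Set.mem_ofPred_eq]
  omega

lemma SimpleGraph.IsTree.mem_subtreeSide_iff_mem_support (hG : G.IsTree) (huv : G.Adj u v)
    {p : G.Walk x u} (hp : p.IsPath) : x ∈ SubtreeSide G u v ↔ v ∈ p.support := by
  rw [hG.mem_subtreeSide_iff huv]
  constructor
  · intro hdist
    by_contra hv
    have := hG.length_eq_dist (hp.concat hv huv)
    rw [Walk.length_concat, hG.length_eq_dist hp] at this
    omega
  · intro hv
    obtain ⟨q, hq, -⟩ := hG.connected.exists_path_of_dist x v
    rw [← hG.length_eq_dist hp, ← hG.length_eq_dist hq,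
      hG.isAcyclic.path_concat hq hp huv.symm hv, Walk.length_concat]

lemma SimpleGraph.IsTree.disjoint_subtreeSide (hG : G.IsTree) {a b : V} (ha : G.Adj v a)
    (hb : G.Adj v b) (hab : a ≠ b) : Disjoint (SubtreeSide G v a) (SubtreeSide G v b) := by
  refine Set.disjoint_left.2 fun x hxa hxb => hab ?_
  -- both `a` and `b` are the penultimate vertex of the path from `x` to `v`
  obtain ⟨p, hp, -⟩ := hG.connected.exists_path_of_dist x v
  rw [hG.isAcyclic.eq_penultimate_of_adj_end hp ha
      ((hG.mem_subtreeSide_iff_mem_support ha hp).1 hxa),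
    hG.isAcyclic.eq_penultimate_of_adj_end hp hb
      ((hG.mem_subtreeSide_iff_mem_support hb hp).1 hxb)]

lemma SimpleGraph.IsTree.subtreeSide_subset (hG : G.IsTree) {d : V} (hwv : G.Adj w v)
    (hvd : G.Adj v d) (hdw : d ≠ w) : SubtreeSide G v d ⊆ SubtreeSide G w v := fun x hxd => by
  by_contra hxv
  exact (hG.disjoint_subtreeSide hvd hwv.symm hdw).notMem_of_mem_left hxd
    ((hG.notMem_subtreeSide_iff hwv).1 hxv)

lemma SimpleGraph.IsTree.eq_of_adj_of_mem_subtreeSide_of_notMem (hG : G.IsTree)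
    (huv : G.Adj u v) (hx : x ∈ SubtreeSide G u v) (hy : y ∉ SubtreeSide G u v)
    (hxy : G.Adj x y) : y = u := by
  classical
  obtain ⟨p, hp, -⟩ := hG.connected.exists_path_of_dist y u
  have hvp : v ∉ p.support := (hG.mem_subtreeSide_iff_mem_support huv hp).not.1 hy
  have hxv : x = v := by
    by_cases hxp : x ∈ p.support
    · exact absurd (p.support_dropUntil_subset_support hxp
        ((hG.mem_subtreeSide_iff_mem_support huv (hp.dropUntil hxp)).1 hx)) hvp
    · have := (hG.mem_subtreeSide_iff_mem_support huv (hp.cons hxp (h := hxy))).1 hx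
      simp only [Walk.support_cons, List.mem_cons] at this
      exact this.resolve_right hvp |>.symm
  subst hxv
  by_contra hyu
  exact (hG.disjoint_subtreeSide hxy huv.symm hyu).notMem_of_mem_left
    (mem_subtreeSide_self hxy) ((hG.notMem_subtreeSide_iff huv).1 hy)

lemma SimpleGraph.IsTree.subtreeSide_subset_sdiff (hG : G.IsTree) {d : V} (hwz : G.Adj w z)
    (hwv : G.Adj w v) (hvz : v ≠ z) (hvd : G.Adj v d) (hdw : d ≠ w) :
    SubtreeSide G v d ⊆ SubtreeSide G z w \ {w, v} := fun x hx => by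
  have hxv := hG.subtreeSide_subset hwv hvd hdw hx
  refine ⟨hG.subtreeSide_subset hwz.symm hwv hvz hxv, ?_⟩
  rintro (rfl | rfl)
  · exact left_notMem_subtreeSide hxv
  · exact left_notMem_subtreeSide hx

end SubtreeSide

theorem Relation.ReflTransGen.exists_first_exit {α : Type*} {r : α → α → Prop} {p : α → Prop}
    {a b : α} (h : Relation.ReflTransGen r a b) (ha : p a) (hb : ¬ p b) :
    ∃ c d, Relation.ReflTransGen (fun x y => r x y ∧ p x ∧ p y) a c ∧ p c ∧ r c d ∧ ¬ p d := by
  induction h using Relation.ReflTransGen.head_induction_on with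
  | refl => exact absurd ha hb
  | @head a a' hstep _ ih =>
    by_cases ha' : p a'
    · obtain ⟨c, d, hac, hrest⟩ := ih ha'
      exact ⟨c, d, .head ⟨hstep, ha, ha'⟩ hac, hrest⟩
    · exact ⟨a, a', .refl, ha, hstep, ha'⟩

lemma Set.inter_eq_inter_of_subset {α : Type*} {A B S T : Set α} (h : A ∩ S = B ∩ S)
    (hT : T ⊆ S) : A ∩ T = B ∩ T := by
  rw [← Set.inter_eq_right.2 hT, ← Set.inter_assoc, h, Set.inter_assoc]

lemma Set.insert_sdiff_singleton_inter_compl {α : Type*} {A S : Set α} {v w : α} (hv : v ∈ S)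
    (hw : w ∈ S) : insert v (A \ {w}) ∩ Sᶜ = A ∩ Sᶜ := by
  ext x
  by_cases hxS : x ∈ S
  · simp [hxS]
  · have hxv : x ≠ v := fun h => hxS (h ▸ hv)
    have hxw : x ≠ w := fun h => hxS (h ▸ hw)
    simp [hxS, hxv, hxw]

lemma Set.mem_iff_of_inter_eq_inter {α : Type*} {A B S : Set α} (h : A ∩ S = B ∩ S) {x : α}
    (hx : x ∈ S) : x ∈ A ↔ x ∈ B := by
  simpa [hx] using Set.ext_iff.1 h x

section Slides

variable {V : Type*} {G : SimpleGraph V} {S T A B I : Set V} {u v w : V}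

lemma IndepSet.mono (h : IndepSet G B) (hAB : A ⊆ B) : IndepSet G A :=
  fun _ hu _ hv => h (hAB hu) (hAB hv)

lemma Slide.inter_eq_or_slide_inter {c : V} (hT : ∀ x ∈ T, ∀ y ∉ T, G.Adj x y → y = c)
    (h : Slide G A B) (hA : c ∉ A) (hB : c ∉ B) : A ∩ T = B ∩ T ∨ Slide G (A ∩ T) (B ∩ T) := by
  obtain ⟨u, v, huv, hAB, hBA⟩ := h
  have hu : u ∈ A := (hAB.symm ▸ Set.mem_singleton u : u ∈ A \ B).1
  have hv : v ∈ B := (hBA.symm ▸ Set.mem_singleton v : v ∈ B \ A).1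
  by_cases huT : u ∈ T
  · have hvT : v ∈ T := by
      by_contra hvT
      exact hB (hT u huT v hvT huv ▸ hv)
    right
    refine ⟨u, v, huv, ?_, ?_⟩
    · rw [← Set.inter_sdiff_distrib_right, hAB, Set.singleton_inter_of_mem huT]
    · rw [← Set.inter_sdiff_distrib_right, hBA, Set.singleton_inter_of_mem hvT]
  · have hvT : v ∉ T := by
      intro hvT
      exact hA (hT v hvT u huT huv.symm ▸ hu)
    left
    apply subset_antisymm <;> rw [← Set.sdiff_eq_empty, ← Set.inter_sdiff_distrib_right]
    · rw [hAB, Set.singleton_inter_eq_empty.2 huT]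
    · rw [hBA, Set.singleton_inter_eq_empty.2 hvT]

lemma Step.reflGen_stepOn_inter {c : V} (hT : ∀ x ∈ T, ∀ y ∉ T, G.Adj x y → y = c)
    (h : Step G A B) (hA : c ∉ A) (hB : c ∉ B) :
    Relation.ReflGen (StepOn G T) (A ∩ T) (B ∩ T) := by
  rcases h.2.inter_eq_or_slide_inter hT hA hB with hAB | hAB
  · exact hAB ▸ .refl
  · exact .single ⟨Set.inter_subset_right, h.1.mono Set.inter_subset_left, hAB⟩

lemma Slide.exists_free_adj (h : Slide G A B) (hB : IndepSet G B) (hwA : w ∈ A) (hwB : w ∉ B) :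
    ∃ v, G.Adj w v ∧ v ∈ B ∧ v ∉ A ∧ ∀ d, G.Adj v d → d ≠ w → d ∉ A := by
  obtain ⟨u, v, huv, hAB, hBA⟩ := h
  have hu : w = u := (hAB ▸ (⟨hwA, hwB⟩ : w ∈ A \ B) : w ∈ ({u} : Set V))
  subst hu
  have hv : v ∈ B \ A := hBA.symm ▸ Set.mem_singleton v
  refine ⟨v, huv, hv.1, hv.2, fun d hvd hdw hdA => ?_⟩
  by_cases hdB : d ∈ B
  · exact hB hv.1 hdB hvd
  · exact hdw (hAB ▸ (⟨hdA, hdB⟩ : d ∈ A \ B) : d ∈ ({w} : Set V))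

lemma IndepSet.step_insert_sdiff (hI : IndepSet G I) (hw : w ∈ I) (hv : v ∉ I) (hwv : G.Adj w v)
    (hfree : ∀ d, G.Adj v d → d ≠ w → d ∉ I) : Step G I (insert v (I \ {w})) := by
  refine ⟨?_, w, v, hwv, ?_, ?_⟩
  · rintro a (rfl | ⟨ha, haw⟩) b (rfl | ⟨hb, hbw⟩) hab
    · exact hab.ne rfl
    · exact hfree b hab hbw hb
    · exact hfree a hab.symm haw ha
    · exact hI ha hb hab
  all_goals ext x; by_cases x = w <;> by_cases x = v <;> simp_all

lemma rigidOn_congr {I' : Set V} (h : I ∩ S = I' ∩ S) : RigidOn G S I u ↔ RigidOn G S I' u := by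
  rw [RigidOn, RigidOn, h]

end Slides

section SlideSeq

variable {V : Type*} {G : SimpleGraph V} {S S' I J K : Set V} {L L₁ L₂ : List (Set V)}

/-- The list `L` omits the initial set `I`, so `L.length` is the number of slides. -/
def IsSlideSeqIn (G : SimpleGraph V) (S I J : Set V) (L : List (Set V)) : Prop :=
  (I :: L).IsChain (Step G) ∧ (I :: L).getLast? = some J ∧ ∀ K ∈ L, K ∩ Sᶜ = I ∩ Sᶜ

namespace IsSlideSeqIn

lemma nil : IsSlideSeqIn G S I I [] :=
  ⟨.singleton I, rfl, by simp⟩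

lemma single (h : Step G I J) (hS : J ∩ Sᶜ = I ∩ Sᶜ) : IsSlideSeqIn G S I J [J] :=
  ⟨.cons_cons h (.singleton J), rfl, by simpa using hS⟩

lemma inter_compl_eq (h : IsSlideSeqIn G S I J L) : J ∩ Sᶜ = I ∩ Sᶜ := by
  obtain ⟨-, hJ, hL⟩ := h
  rcases List.mem_cons.1 (List.mem_of_getLast? hJ) with rfl | hJL
  · rfl
  · exact hL J hJL

lemma indepSet (h : IsSlideSeqIn G S I J L) (hI : IndepSet G I) : IndepSet G J :=
  h.1.induction (IndepSet G) _ (fun _ _ hst _ => hst.1) (fun _ => hI) J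
    (List.mem_of_getLast? h.2.1)

lemma mono (h : IsSlideSeqIn G S I J L) (hSS' : S ⊆ S') : IsSlideSeqIn G S' I J L :=
  ⟨h.1, h.2.1, fun K hK =>
    Set.inter_eq_inter_of_subset (h.2.2 K hK) (Set.compl_subset_compl.2 hSS')⟩

lemma append (h₁ : IsSlideSeqIn G S I J L₁) (h₂ : IsSlideSeqIn G S J K L₂) :
    IsSlideSeqIn G S I K (L₁ ++ L₂) := by
  have hJ := h₁.inter_compl_eq
  obtain ⟨hc₁, hl₁, hS₁⟩ := h₁
  obtain ⟨hc₂, hl₂, hS₂⟩ := h₂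
  refine ⟨?_, ?_, ?_⟩
  · rw [← List.cons_append]
    refine hc₁.append hc₂.tail fun x hx y hy => ?_
    rw [hl₁, Option.mem_some_iff] at hx
    subst hx
    exact hc₂.rel_head? hy
  · rcases L₂.eq_nil_or_concat with rfl | ⟨M, K', rfl⟩
    · simp_all
    · simp_all [List.getLast?_cons]
  · intro K' hK'
    rcases List.mem_append.1 hK' with hK' | hK'
    · exact hS₁ K' hK'
    · exact (hS₂ K' hK').trans hJ

lemma append_step_insert_sdiff {U : Set V} {v w : V} (h : IsSlideSeqIn G U I J L)
    (hUS : U ⊆ S \ {w, v}) (hvS : v ∈ S) (hwS : w ∈ S) (hI : IndepSet G I) (hw : w ∈ I)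
    (hwv : G.Adj w v) (hfree : ∀ d, G.Adj v d → d ≠ w → d ∉ J) :
    IsSlideSeqIn G S I (insert v (J \ {w})) (L ++ [insert v (J \ {w})]) := by
  have hwJ : w ∈ J :=
    (Set.mem_iff_of_inter_eq_inter h.inter_compl_eq fun hwU => (hUS hwU).2 (.inl rfl)).2 hw
  have hvJ : v ∉ J := by
    rw [Set.mem_iff_of_inter_eq_inter h.inter_compl_eq fun hvU => (hUS hvU).2 (.inr rfl)]
    exact fun hv => hI hw hv hwv
  exact (h.mono (hUS.trans Set.sdiff_subset)).append
    (single ((h.indepSet hI).step_insert_sdiff hwJ hvJ hwv hfree)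
      (Set.insert_sdiff_singleton_inter_compl hvS hwS))

end IsSlideSeqIn

end SlideSeq

section Vacate

variable {V : Type*} [Finite V] {G : SimpleGraph V}

lemma exists_slideSeqIn_vacate_biUnion {T : V → Set V} {D : Set V}
    (hdisj : D.PairwiseDisjoint T) (hmem : ∀ d ∈ D, d ∈ T d)
    (hvac : ∀ d ∈ D, ∀ I, IndepSet G I → ¬ RigidOn G (T d) I d →
      ∃ L J, IsSlideSeqIn G (T d) I J L ∧ d ∉ J ∧ L.length ≤ (T d).ncard)
    {I : Set V} (hI : IndepSet G I) (hmov : ∀ d ∈ D, ¬ RigidOn G (T d) I d) :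
    ∃ L J, IsSlideSeqIn G (⋃ d ∈ D, T d) I J L ∧ (∀ d ∈ D, d ∉ J) ∧
      L.length ≤ (⋃ d ∈ D, T d).ncard := by
  induction D, D.toFinite using Set.Finite.induction_on generalizing I with
  | empty => exact ⟨[], I, .nil, by simp, by simp⟩
  | @insert d D hdD _ ih =>
    rw [Set.pairwiseDisjoint_insert] at hdisj
    have hdisj' : Disjoint (T d) (⋃ e ∈ D, T e) :=
      Set.disjoint_iUnion₂_right.2 fun e he => hdisj.2 e he (ne_of_mem_of_not_mem he hdD).symm
    obtain ⟨L₁, J₁, h₁, hdJ₁, hlen₁⟩ :=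
      hvac d (Set.mem_insert d D) I hI (hmov d (Set.mem_insert d D))
    have hJ₁ : ∀ e ∈ D, J₁ ∩ T e = I ∩ T e := fun e he =>
      Set.inter_eq_inter_of_subset h₁.inter_compl_eq
        (Set.subset_compl_iff_disjoint_left.2 (hdisj'.mono_right (Set.subset_biUnion_of_mem he)))
    obtain ⟨L₂, J₂, h₂, hJ₂, hlen₂⟩ := ih hdisj.1 (fun e he => hmem e (Set.mem_insert_of_mem d he))
      (fun e he => hvac e (Set.mem_insert_of_mem d he)) (h₁.indepSet hI)
      (fun e he => (rigidOn_congr (hJ₁ e he)).not.2 (hmov e (Set.mem_insert_of_mem d he)))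
    refine ⟨L₁ ++ L₂, J₂, ?_, ?_, ?_⟩
    · rw [Set.biUnion_insert]
      exact (h₁.mono Set.subset_union_left).append (h₂.mono Set.subset_union_right)
    · rintro e (rfl | he)
      · rwa [Set.mem_iff_of_inter_eq_inter h₂.inter_compl_eq
          (hdisj'.notMem_of_mem_left (hmem e (Set.mem_insert e D)))]
      · exact hJ₂ e he
    · rw [Set.biUnion_insert, Set.ncard_union_eq hdisj', List.length_append]
      omega

end Vacate

namespace SimpleGraph.IsTree

variable {V : Type*} {G : SimpleGraph V} {I : Set V} {w z : V}

lemma exists_adj_forall_not_rigidOn (hG : G.IsTree) (hwz : G.Adj w z) (hI : IndepSet G I)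
    (hw : w ∈ I) (hmov : ¬ RigidOn G (SubtreeSide G z w) I w) :
    ∃ v, G.Adj w v ∧ v ∈ SubtreeSide G z w ∧
      ∀ d, G.Adj v d → d ≠ w → ¬ RigidOn G (SubtreeSide G v d) I d := by
  set S := SubtreeSide G z w
  simp only [RigidOn, not_forall, exists_prop] at hmov
  obtain ⟨J, hJ, hwJ⟩ := hmov
  obtain ⟨A, B, hIA, ⟨hwA, hA⟩, hAB, hB⟩ :=
    Relation.ReflTransGen.exists_first_exit (p := fun X : Set V => w ∈ X ∧ IndepSet G X) hJ
      ⟨⟨hw, mem_subtreeSide_self hwz.symm⟩, hI.mono Set.inter_subset_left⟩ (fun h => hwJ h.1)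
  obtain ⟨v, hwv, hvB, hvA, hfree⟩ :=
    hAB.2.2.exists_free_adj hAB.2.1 hwA fun hwB => hB ⟨hwB, hAB.2.1⟩
  have hvS : v ∈ S := hAB.1 hvB
  refine ⟨v, hwv, hvS, fun d hvd hdw hrig => hfree d hvd hdw (hrig (A ∩ SubtreeSide G v d) ?_).1⟩
  have hsub : SubtreeSide G v d ⊆ S :=
    (hG.subtreeSide_subset_sdiff hwz hwv (ne_of_mem_of_not_mem hvS left_notMem_subtreeSide) hvd
      hdw).trans Set.sdiff_subset
  have hIS : I ∩ SubtreeSide G v d = I ∩ S ∩ SubtreeSide G v d := by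
    rw [Set.inter_assoc, Set.inter_eq_right.2 hsub]
  rw [hIS]
  exact hIA.lift' (· ∩ SubtreeSide G v d) fun X Y ⟨hXY, ⟨hwX, hX⟩, ⟨hwY, hY⟩⟩ =>
    (Step.reflGen_stepOn_inter
      (fun x hx y hy => hG.eq_of_adj_of_mem_subtreeSide_of_notMem hvd hx hy) hXY.2
      (fun hvX => hX hwX hvX hwv) (fun hvY => hY hwY hvY hwv)).to_reflTransGen

theorem exists_slideSeqIn_vacate [Finite V] (hG : G.IsTree) (hwz : G.Adj w z)
    (hI : IndepSet G I) (hmov : ¬ RigidOn G (SubtreeSide G z w) I w) :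
    ∃ L J, IsSlideSeqIn G (SubtreeSide G z w) I J L ∧ w ∉ J ∧
      L.length < (SubtreeSide G z w).ncard := by
  induction hn : (SubtreeSide G z w).ncard using Nat.strong_induction_on
    generalizing w z I with
  | _ n ih =>
  set S := SubtreeSide G z w
  have hwS : w ∈ S := mem_subtreeSide_self hwz.symm
  by_cases hw : w ∉ I
  · exact ⟨[], I, .nil, hw, hn ▸ (Set.ncard_pos S.toFinite).2 ⟨w, hwS⟩⟩
  rw [not_not] at hw
  obtain ⟨v, hwv, hvS, hmov_child⟩ := hG.exists_adj_forall_not_rigidOn hwz hI hw hmov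
  have hvz : v ≠ z := ne_of_mem_of_not_mem hvS left_notMem_subtreeSide
  set D := {d | G.Adj v d ∧ d ≠ w}
  have hUS : ⋃ d ∈ D, SubtreeSide G v d ⊆ S \ {w, v} := Set.iUnion₂_subset fun d ⟨hvd, hdw⟩ =>
    hG.subtreeSide_subset_sdiff hwz hwv hvz hvd hdw
  have hcard :=
    Set.ncard_sdiff_add_ncard_of_subset (Set.insert_subset hwS (Set.singleton_subset_iff.2 hvS))
  rw [Set.ncard_pair hwv.ne, hn] at hcard
  have hUcard := Set.ncard_le_ncard hUS
  obtain ⟨L, J, hL, hJ, hlen⟩ := exists_slideSeqIn_vacate_biUnion (G := G) (D := D)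
    (fun a ha b hb hab => hG.disjoint_subtreeSide ha.1 hb.1 hab)
    (fun d hd => mem_subtreeSide_self hd.1)
    (fun d hd I' hI' hmov_d => by
      have hdU : SubtreeSide G v d ⊆ ⋃ d ∈ D, SubtreeSide G v d := Set.subset_biUnion_of_mem hd
      have := Set.ncard_le_ncard hdU
      obtain ⟨L, J, h, hJ, hlt⟩ := ih _ (by omega) hd.1.symm hI' hmov_d rfl
      exact ⟨L, J, h, hJ, hlt.le⟩) hI (fun d hd => hmov_child d hd.1 hd.2)
  refine ⟨_, _, hL.append_step_insert_sdiff hUS hvS hwS hI hw hwv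
    fun d hvd hdw => hJ d ⟨hvd, hdw⟩, by simp [hwv.ne], ?_⟩
  rw [List.length_append, List.length_singleton]
  omega

end SimpleGraph.IsTree

theorem linear_length_vacate :
    ∃ C : ℕ, ∀ (V : Type) [Fintype V] (G : SimpleGraph V), G.IsTree →
      ∀ I : Set V, IndepSet G I → ∀ w ∈ I, ∀ z, G.Adj w z →
        ¬ RigidOn G (SubtreeSide G z w) I w →
        ∃ L : List (Set V), L.Chain' (Step G) ∧ L.head? = some I ∧
          (∃ I' : Set V, L.getLast? = some I' ∧ w ∉ I') ∧
          (∀ J ∈ L, J ∩ (SubtreeSide G z w)ᶜ = I ∩ (SubtreeSide G z w)ᶜ) ∧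
          L.length ≤ C * ((SubtreeSide G z w).ncard + 1) := by
  refine ⟨1, fun V _ G hG I hI w _ z hwz hmov => ?_⟩
  obtain ⟨L, J, ⟨hchain, hlast, hout⟩, hwJ, hlen⟩ := hG.exists_slideSeqIn_vacate hwz hI hmov
  refine ⟨I :: L, hchain, rfl, ⟨J, hlast, hwJ⟩, List.forall_mem_cons.2 ⟨rfl, hout⟩, ?_⟩
  rw [List.length_cons]
  omega
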